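/- Assume {(a_i,u_i)}_{i=1}^n is superincreasing and a_i u_i ≤ b for all i. For j ∈ I let ℓ_j = {x ∈ ℤⁿ : x_i ∈ {0, u_i} for all i < j, x_j ∈ {0, θ_j − 1}, and x_i = θ_i for all i > j}, and for c ∈ ℝⁿ let Opt(c) = {x ∈ K : ∑_i c_i x_i = max_{y ∈ K} ∑_i c_i y_i}. Let c ∈ ℝⁿ and j ∈ {1,…,n} be such that c_j > 0, c_t > 0 for every t ∈ I_j, and, in case j ∈ I, ℓ_j ∩ Opt(c) = ∅. Then every x ∈ Opt(c) satisfies x_j + ∑_{i ∈ I_j} φ_j(i)(x_i − θ_i) = θ_j. -/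

import Mathlib

/-!
Let `m` be the largest index above `j` at which the optimal point `x` differs from the greedy
solution `θ`. Superincreasingness makes every box point that agrees with `θ` above `m` and lies
strictly below `θ` at `m` feasible, whatever its lower coordinates are, while no feasible point
agreeing with `θ` above `m` exceeds `θ m`. Hence `x m < θ m`, optimality forces `x m = θ m - 1`
and `x i = u i` for every lower `i` with `c i > 0`, and the packing sum telescopes, the
coefficients `φ j i` being `(u j - θ j)` times partial products of the factors `1 + (u k - θ k)`.
If there is no such `m`, then `x j ∈ {θ j - 1, θ j}`, and `x j = θ j - 1` is excluded because
pushing every lower coordinate to `0` or `u i` according to the sign of `c i` would produce an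
optimal point of the leaf `ℓ_j`.
-/

open Finset Function

theorem Finset.sum_prod_one_add_filter_lt_mul_eq_neg_one {ι R : Type*} [LinearOrder ι]
    [CommRing R] {s : Finset ι} {m : ι} (hm : m ∈ s) (g w : ι → R)
    (hlt : ∀ i ∈ s, i < m → w i = g i) (hwm : w m = -1) (hgt : ∀ i ∈ s, m < i → w i = 0) :
    ∑ i ∈ s, (∏ k ∈ s with k < i, (1 + g k)) * w i = -1 := by
  set t := s.filter (· < m)
  have hrest : s.filter (fun i => ¬ i < m) = insert m (s.filter (m < ·)) := by
    ext i; simp only [mem_filter, mem_insert, not_lt]; constructor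
    · rintro ⟨hi, hmi⟩; rcases hmi.eq_or_lt with rfl | h <;> simp_all
    · rintro (rfl | ⟨hi, hmi⟩) <;> simp_all [le_of_lt]
  have hbelow : ∑ i ∈ t, (∏ k ∈ s with k < i, (1 + g k)) * w i = ∏ i ∈ t, (1 + g i) - 1 := by
    rw [prod_one_add_ordered, add_sub_cancel_left]
    refine sum_congr rfl fun i hi => ?_
    obtain ⟨his, him⟩ := mem_filter.1 hi
    have : s.filter (· < i) = t.filter (· < i) := by
      ext k; simp only [t, mem_filter]
      exact ⟨fun ⟨hk, hki⟩ => ⟨⟨hk, hki.trans him⟩, hki⟩, fun ⟨⟨hk, _⟩, hki⟩ => ⟨hk, hki⟩⟩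
    rw [this, hlt i his him, mul_comm]
  have habove : ∑ i ∈ s with m < i, (∏ k ∈ s with k < i, (1 + g k)) * w i = 0 :=
    sum_eq_zero fun i hi => by rw [hgt i (mem_filter.1 hi).1 (mem_filter.1 hi).2, mul_zero]
  rw [← sum_filter_add_sum_filter_not s (· < m), hrest, sum_insert (by simp), hwm, habove,
    hbelow]
  ring

variable {ι : Type*}

def rect (u : ι → ℤ) : Set (ι → ℤ) := {x | ∀ i, 0 ≤ x i ∧ x i ≤ u i}

theorem update_mem_rect [DecidableEq ι] {u x : ι → ℤ} (hx : x ∈ rect u) {i : ι} {v : ℤ}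
    (hv : 0 ≤ v ∧ v ≤ u i) : update x i v ∈ rect u := by
  intro k
  rcases eq_or_ne k i with rfl | hk
  · simpa using hv
  · simpa [hk] using hx k

section Optimality

variable [Fintype ι]

def knapsack (a u : ι → ℤ) (b : ℤ) : Set (ι → ℤ) := {x | x ∈ rect u ∧ ∑ i, a i * x i ≤ b}

def objective (c : ι → ℝ) (x : ι → ℤ) : ℝ := ∑ i, c i * (x i : ℝ)

def IsOptimal (a u : ι → ℤ) (b : ℤ) (c : ι → ℝ) (x : ι → ℤ) : Prop :=
  x ∈ knapsack a u b ∧ ∀ y ∈ knapsack a u b, objective c y ≤ objective c x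

theorem objective_update [DecidableEq ι] (c : ι → ℝ) (x : ι → ℤ) (i : ι) (v : ℤ) :
    objective c (update x i v) = objective c x + c i * (v - x i) := by
  rw [objective, objective, ← sub_eq_iff_eq_add', ← sum_sub_distrib]
  calc ∑ k, (c k * (update x i v k : ℤ) - c k * x k)
      = ∑ k, if k = i then c i * (v - x i) else 0 :=
        sum_congr rfl fun k _ => by rcases eq_or_ne k i with rfl | hk <;> simp [*, mul_sub]
    _ = c i * (v - x i) := by simp

theorem IsOptimal.le_of_update_mem [DecidableEq ι] {a u x : ι → ℤ} {b : ℤ} {c : ι → ℝ}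
    (hx : IsOptimal a u b c x) {i : ι} {v : ℤ} (hc : 0 < c i)
    (hv : update x i v ∈ knapsack a u b) : v ≤ x i := by
  have h := hx.2 _ hv
  rw [objective_update] at h
  by_contra! hlt
  have hgain : 0 < c i * ((v : ℝ) - x i) := mul_pos hc (sub_pos.2 (by exact_mod_cast hlt))
  linarith

end Optimality

section Greedy

variable [LinearOrder ι] [LocallyFiniteOrderTop ι]

def residualCapacity (a θ : ι → ℤ) (b : ℤ) (i : ι) : ℤ := b - ∑ k ∈ Ioi i, a k * θ k

def IsGreedy (a u : ι → ℤ) (b : ℤ) (θ : ι → ℤ) : Prop :=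
  ∀ i, θ i = min (u i) ((residualCapacity a θ b i).fdiv (a i))

theorem le_greedy_iff {a u θ : ι → ℤ} {b : ℤ} (hθ : IsGreedy a u b θ) {i : ι} (ha : 0 < a i)
    {v : ℤ} : v ≤ θ i ↔ v ≤ u i ∧ a i * v ≤ residualCapacity a θ b i := by
  rw [hθ i, le_min_iff, Int.fdiv_eq_ediv_of_nonneg _ ha.le, Int.le_ediv_iff_mul_le ha, mul_comm]

end Greedy

def IsSuperincreasing [LinearOrder ι] [LocallyFiniteOrderBot ι] (a u : ι → ℤ) : Prop :=
  ∀ i, ∑ k ∈ Iio i, a k * u k ≤ a i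

theorem isSuperincreasing_of_succ {n : ℕ} {a u : Fin n → ℤ} (ha : ∀ i, 0 ≤ a i)
    (hsi : ∀ i j : Fin n, (j : ℕ) = i + 1 → ∑ k ∈ Iic i, a k * u k ≤ a j) :
    IsSuperincreasing a u := by
  intro i
  rcases Nat.eq_zero_or_pos i with hi | hi
  · rw [Iio_eq_empty.2 fun k _ => by simp [Fin.le_def, hi], sum_empty]
    exact ha i
  · have hpred : Iio i = Iic ⟨i - 1, by omega⟩ := by
      ext k; simp only [mem_Iio, mem_Iic, Fin.lt_def, Fin.le_def]; omega
    rw [hpred]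
    exact hsi _ _ (by simp only; omega)

section Knapsack

variable [LinearOrder ι] [Fintype ι] [LocallyFiniteOrderTop ι] [LocallyFiniteOrderBot ι]
  {a u θ x y : ι → ℤ} {b : ℤ} {c : ι → ℝ}

theorem sum_eq_sum_Iio_add_add_sum_Ioi {M : Type*} [AddCommMonoid M] (f : ι → M) (m : ι) :
    ∑ i, f i = ∑ i ∈ Iio m, f i + f m + ∑ i ∈ Ioi m, f i := by
  rw [add_assoc, add_sum_Ioi_eq_sum_Ici, ← sum_union (disjoint_left.2 fun i hi hi' =>
    (mem_Ici.1 hi').not_gt (mem_Iio.1 hi))]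
  exact (sum_subset (subset_univ _) fun i _ hi => by simp [lt_or_ge] at hi).symm

theorem mem_knapsack_of_lt_greedy (ha : ∀ i, 0 < a i) (hθ : IsGreedy a u b θ)
    (hsup : IsSuperincreasing a u) (m : ι) (hy : y ∈ rect u) (habove : ∀ k, m < k → y k = θ k)
    (hm : y m < θ m) : y ∈ knapsack a u b := by
  refine ⟨hy, ?_⟩
  have hlow : ∑ k ∈ Iio m, a k * y k ≤ a m :=
    (sum_le_sum fun k _ => mul_le_mul_of_nonneg_left (hy k).2 (ha k).le).trans (hsup m)
  have hhigh : ∑ k ∈ Ioi m, a k * y k = ∑ k ∈ Ioi m, a k * θ k :=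
    sum_congr rfl fun k hk => by rw [habove k (mem_Ioi.1 hk)]
  have hfill := ((le_greedy_iff hθ (ha m)).1 le_rfl).2
  have hstep : a m * (y m + 1) ≤ a m * θ m := mul_le_mul_of_nonneg_left hm (ha m).le
  rw [residualCapacity] at hfill
  rw [sum_eq_sum_Iio_add_add_sum_Ioi _ m, hhigh]
  linarith

theorem le_greedy_of_mem_knapsack (ha : ∀ i, 0 < a i) (hθ : IsGreedy a u b θ) {m : ι}
    (hy : y ∈ knapsack a u b) (habove : ∀ k, m < k → y k = θ k) : y m ≤ θ m := by
  refine (le_greedy_iff hθ (ha m)).2 ⟨(hy.1 m).2, ?_⟩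
  have hlow : 0 ≤ ∑ k ∈ Iio m, a k * y k :=
    sum_nonneg fun k _ => mul_nonneg (ha k).le (hy.1 k).1
  have hhigh : ∑ k ∈ Ioi m, a k * y k = ∑ k ∈ Ioi m, a k * θ k :=
    sum_congr rfl fun k hk => by rw [habove k (mem_Ioi.1 hk)]
  have hweight := hy.2
  rw [sum_eq_sum_Iio_add_add_sum_Ioi _ m, hhigh] at hweight
  rw [residualCapacity]
  linarith

theorem IsOptimal.greedy_sub_one_le (ha : ∀ i, 0 < a i) (hθ : IsGreedy a u b θ)
    (hsup : IsSuperincreasing a u) (hx : IsOptimal a u b c x) {m : ι} (hc : 0 < c m)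
    (habove : ∀ k, m < k → x k = θ k) : θ m - 1 ≤ x m := by
  by_contra! h
  have hθu := ((le_greedy_iff hθ (ha m)).1 le_rfl).1
  have hmem : update x m (x m + 1) ∈ knapsack a u b := by
    refine mem_knapsack_of_lt_greedy ha hθ hsup m
      (update_mem_rect hx.1.1 ⟨by linarith [(hx.1.1 m).1], by linarith⟩) (fun k hk => ?_) ?_
    · rw [update_of_ne hk.ne']; exact habove k hk
    · rw [update_self]; linarith
  linarith [hx.le_of_update_mem hc hmem]

theorem IsOptimal.eq_upper_of_lt_greedy (ha : ∀ i, 0 < a i) (hθ : IsGreedy a u b θ)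
    (hsup : IsSuperincreasing a u) (hx : IsOptimal a u b c x) {m : ι}
    (habove : ∀ k, m < k → x k = θ k) (hm : x m < θ m) {i : ι} (hi : i < m) (hc : 0 < c i) :
    x i = u i := by
  have hmem : update x i (u i) ∈ knapsack a u b := by
    refine mem_knapsack_of_lt_greedy ha hθ hsup m
      (update_mem_rect hx.1.1 ⟨(hx.1.1 i).1.trans (hx.1.1 i).2, le_rfl⟩) (fun k hk => ?_) ?_
    · rw [update_of_ne (hi.trans hk).ne']; exact habove k hk
    · rwa [update_of_ne hi.ne']
  exact le_antisymm (hx.1.1 i).2 (hx.le_of_update_mem hc hmem)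

theorem IsOptimal.exists_extreme_below (ha : ∀ i, 0 < a i) (hθ : IsGreedy a u b θ)
    (hsup : IsSuperincreasing a u) (hx : IsOptimal a u b c x) {m : ι}
    (habove : ∀ k, m < k → x k = θ k) (hm : x m < θ m) :
    ∃ x', IsOptimal a u b c x' ∧ (∀ k, k < m → x' k = 0 ∨ x' k = u k) ∧
      ∀ k, m ≤ k → x' k = x k := by
  set x' : ι → ℤ := fun k => if k < m then (if 0 ≤ c k then u k else 0) else x k
  have hrect : x' ∈ rect u := fun k => by
    have := hx.1.1 k
    simp only [x']; split_ifs <;> omega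
  have hgain : objective c x ≤ objective c x' := sum_le_sum fun k _ => by
    have hxk := hx.1.1 k
    simp only [x']; split_ifs with hk hc
    · exact mul_le_mul_of_nonneg_left (by exact_mod_cast hxk.2) hc
    · simpa using mul_nonpos_of_nonpos_of_nonneg (not_le.1 hc).le
        (by exact_mod_cast hxk.1 : (0 : ℝ) ≤ x k)
    · rfl
  have hsame : ∀ k, m ≤ k → x' k = x k := fun k hk => if_neg hk.not_gt
  refine ⟨x', ⟨mem_knapsack_of_lt_greedy ha hθ hsup m hrect (fun k hk => ?_) ?_,
    fun y hy => (hx.2 y hy).trans hgain⟩, fun k hk => ?_, hsame⟩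
  · rw [hsame k hk.le]; exact habove k hk
  · rwa [hsame m le_rfl]
  · simp only [x', if_pos hk]; split_ifs <;> simp

theorem IsOptimal.eq_greedy_or_exists_leaf (ha : ∀ i, 0 < a i) (hθ : IsGreedy a u b θ)
    (hsup : IsSuperincreasing a u) (hx : IsOptimal a u b c x) {m : ι} (hc : 0 < c m)
    (habove : ∀ k, m < k → x k = θ k) :
    x m = θ m ∨ 1 ≤ θ m ∧ ∃ x', IsOptimal a u b c x' ∧ (∀ k, k < m → x' k = 0 ∨ x' k = u k) ∧
      x' m = θ m - 1 ∧ ∀ k, m < k → x' k = θ k := by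
  have hge := hx.greedy_sub_one_le ha hθ hsup hc habove
  rcases (le_greedy_of_mem_knapsack ha hθ hx.1 habove).eq_or_lt with heq | hlt
  · exact Or.inl heq
  obtain ⟨x', hx', hbelow, hsame⟩ := hx.exists_extreme_below ha hθ hsup habove hlt
  refine Or.inr ⟨by linarith [(hx.1.1 m).1], x', hx', hbelow, ?_, fun k hk => ?_⟩
  · rw [hsame m le_rfl]; omega
  · rw [hsame k hk.le, habove k hk]

end Knapsack

section Packing

variable [LinearOrder ι] [LocallyFiniteOrder ι] [LocallyFiniteOrderTop ι]

def packingCoeff (u θ : ι → ℤ) (j i : ι) : ℤ :=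
  (u j - θ j) * ∏ k ∈ (Ioo j i).filter (fun k => 1 ≤ θ k), (u k + 1 - θ k)

theorem packingCoeff_eq (u θ : ι → ℤ) (j i : ι) :
    packingCoeff u θ j i =
      (u j - θ j) * ∏ k ∈ (Ioi j).filter (fun k => 1 ≤ θ k) with k < i, (1 + (u k - θ k)) := by
  rw [packingCoeff]
  congr 1
  refine prod_congr ?_ fun k _ => by ring
  ext k
  simp only [mem_filter, mem_Ioo, mem_Ioi]
  tauto

theorem sum_packingCoeff_mul_eq {u θ x : ι → ℤ} {j m : ι} (hjm : j < m) (hθm : 1 ≤ θ m)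
    (hbelow : ∀ i, j < i → i < m → 1 ≤ θ i → x i = u i) (hxm : x m = θ m - 1)
    (habove : ∀ i, m < i → x i = θ i) :
    ∑ i ∈ (Ioi j).filter (fun i => 1 ≤ θ i), packingCoeff u θ j i * (x i - θ i) = θ j - u j := by
  simp_rw [packingCoeff_eq, mul_assoc, ← mul_sum]
  rw [sum_prod_one_add_filter_lt_mul_eq_neg_one (m := m) (by simp [hjm, hθm])]
  · ring
  · intro i hi him
    obtain ⟨hji, hθi⟩ := mem_filter.1 hi
    rw [hbelow i (mem_Ioi.1 hji) him hθi]
  · rw [hxm]; ring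
  · intro i _ hmi
    rw [habove i hmi, sub_self]

end Packing

section Main

variable [LinearOrder ι] [Fintype ι] [LocallyFiniteOrder ι] [LocallyFiniteOrderTop ι]
  [LocallyFiniteOrderBot ι] {a u θ x : ι → ℤ} {b : ℤ} {c : ι → ℝ}

theorem IsOptimal.add_sum_packingCoeff_mul_eq (ha : ∀ i, 0 < a i) (hθ : IsGreedy a u b θ)
    (hsup : IsSuperincreasing a u) (hx : IsOptimal a u b c x) {j : ι} (hcj : 0 < c j)
    (hct : ∀ t, j < t → 1 ≤ θ t → 0 < c t) (hdiff : ∃ i, j < i ∧ x i ≠ θ i) :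
    x j + ∑ i ∈ (Ioi j).filter (fun i => 1 ≤ θ i), packingCoeff u θ j i * (x i - θ i) = θ j := by
  obtain ⟨m, ⟨hjm, hxm⟩, hmax⟩ := wellFounded_gt.has_min {i | j < i ∧ x i ≠ θ i} hdiff
  have habove : ∀ k, m < k → x k = θ k := fun k hk => by
    by_contra hne
    exact hmax k ⟨hjm.trans hk, hne⟩ hk
  have hlt : x m < θ m := (le_greedy_of_mem_knapsack ha hθ hx.1 habove).lt_of_ne hxm
  have hθm : 1 ≤ θ m := by linarith [(hx.1.1 m).1]
  have hcm := hct m hjm hθm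
  have hxm' : x m = θ m - 1 := by linarith [hx.greedy_sub_one_le ha hθ hsup hcm habove]
  have hupper {i : ι} (hi : i < m) (hc : 0 < c i) : x i = u i :=
    hx.eq_upper_of_lt_greedy ha hθ hsup habove hlt hi hc
  rw [sum_packingCoeff_mul_eq hjm hθm (fun i hji him hθi => hupper him (hct i hji hθi)) hxm'
    habove, hupper hjm hcj]
  ring

end Main

theorem stmt_10_general {n : ℕ}
    (a u : Fin n → ℤ) (ha : ∀ i, 0 < a i)
    (b : ℤ)
    (hsi : ∀ i j : Fin n, (j : ℕ) = (i : ℕ) + 1 →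
      ∑ k ∈ Finset.Iic i, a k * u k ≤ a j)
    (θ : Fin n → ℤ)
    (hθ : ∀ i : Fin n,
      θ i = min (u i) ((b - ∑ k ∈ Finset.Ioi i, a k * θ k).fdiv (a i)))
    (φ : Fin n → Fin n → ℤ)
    (hφ : ∀ j i : Fin n, φ j i =
      (u j - θ j) * ∏ k ∈ (Finset.Ioo j i).filter (fun k => 1 ≤ θ k), (u k + 1 - θ k))
    (c : Fin n → ℝ) (j : Fin n)
    (hcj : 0 < c j) (hct : ∀ t, j < t → 1 ≤ θ t → 0 < c t)
    (hleaf : 1 ≤ θ j →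
      ∀ x : Fin n → ℤ,
        -- x ∈ ℓ_j :
        ((∀ i, i < j → x i = 0 ∨ x i = u i) ∧ (x j = 0 ∨ x j = θ j - 1) ∧
          (∀ i, j < i → x i = θ i)) →
        -- x ∈ Opt(c) :
        (((∀ i, 0 ≤ x i ∧ x i ≤ u i) ∧ ∑ i, a i * x i ≤ b) ∧
          (∀ y : Fin n → ℤ, (∀ i, 0 ≤ y i ∧ y i ≤ u i) → ∑ i, a i * y i ≤ b →
            ∑ i, c i * (y i : ℝ) ≤ ∑ i, c i * (x i : ℝ))) →
        False) :
    ∀ x : Fin n → ℤ, (∀ i, 0 ≤ x i ∧ x i ≤ u i) → ∑ i, a i * x i ≤ b →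
      (∀ y : Fin n → ℤ, (∀ i, 0 ≤ y i ∧ y i ≤ u i) → ∑ i, a i * y i ≤ b →
        ∑ i, c i * (y i : ℝ) ≤ ∑ i, c i * (x i : ℝ)) →
      x j + ∑ i ∈ (Finset.Ioi j).filter (fun i => 1 ≤ θ i), φ j i * (x i - θ i)
        = θ j := by
  intro x hxrect hxb hopt
  have hx : IsOptimal a u b c x := ⟨⟨hxrect, hxb⟩, fun y hy => hopt y hy.1 hy.2⟩
  have hsup := isSuperincreasing_of_succ (fun i => (ha i).le) hsi
  obtain rfl : φ = packingCoeff u θ := funext fun j => funext (hφ j)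
  by_cases hagree : ∀ i, j < i → x i = θ i
  · rcases hx.eq_greedy_or_exists_leaf ha hθ hsup hcj hagree with
      hxj | ⟨hθj, x', hx', hbelow, hx'j, hx'above⟩
    · rw [sum_eq_zero fun i hi => by rw [hagree i (mem_Ioi.1 (mem_filter.1 hi).1), sub_self,
        mul_zero], add_zero, hxj]
    · exact (hleaf hθj x' ⟨hbelow, Or.inr hx'j, hx'above⟩
        ⟨hx'.1, fun y hy hyb => hx'.2 y ⟨hy, hyb⟩⟩).elim
  · exact hx.add_sum_packingCoeff_mul_eq ha hθ hsup hcj hct (by simpa using hagree)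

/-- if `c j > 0`, `c t > 0` for all `t ∈ I_j`, and (in case `j ∈ I`) the
leaf `ℓ_j` contains no optimal solution, then every optimal solution of
`max {c·x : x ∈ K}` satisfies the `j`-th packing inequality with equality. -/
theorem stmt_10 {n : ℕ} (hn : 1 ≤ n)
    (a u : Fin n → ℤ) (ha : ∀ i, 0 < a i) (hu : ∀ i, 1 ≤ u i)
    (b : ℤ) (hb : 0 < b)
    (hub : ∀ i, a i * u i ≤ b)
    (hsi : ∀ i j : Fin n, (j : ℕ) = (i : ℕ) + 1 →
      ∑ k ∈ Finset.Iic i, a k * u k ≤ a j)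
    (θ : Fin n → ℤ)
    (hθ : ∀ i : Fin n,
      θ i = min (u i) ((b - ∑ k ∈ Finset.Ioi i, a k * θ k).fdiv (a i)))
    (φ : Fin n → Fin n → ℤ)
    (hφ : ∀ j i : Fin n, φ j i =
      (u j - θ j) * ∏ k ∈ (Finset.Ioo j i).filter (fun k => 1 ≤ θ k), (u k + 1 - θ k))
    (c : Fin n → ℝ) (j : Fin n)
    (hcj : 0 < c j) (hct : ∀ t, j < t → 1 ≤ θ t → 0 < c t)
    (hleaf : 1 ≤ θ j →
      ∀ x : Fin n → ℤ,
        -- x ∈ ℓ_j :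
        ((∀ i, i < j → x i = 0 ∨ x i = u i) ∧ (x j = 0 ∨ x j = θ j - 1) ∧
          (∀ i, j < i → x i = θ i)) →
        -- x ∈ Opt(c) :
        (((∀ i, 0 ≤ x i ∧ x i ≤ u i) ∧ ∑ i, a i * x i ≤ b) ∧
          (∀ y : Fin n → ℤ, (∀ i, 0 ≤ y i ∧ y i ≤ u i) → ∑ i, a i * y i ≤ b →
            ∑ i, c i * (y i : ℝ) ≤ ∑ i, c i * (x i : ℝ))) →
        False) :
    ∀ x : Fin n → ℤ, (∀ i, 0 ≤ x i ∧ x i ≤ u i) → ∑ i, a i * x i ≤ b →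
      (∀ y : Fin n → ℤ, (∀ i, 0 ≤ y i ∧ y i ≤ u i) → ∑ i, a i * y i ≤ b →
        ∑ i, c i * (y i : ℝ) ≤ ∑ i, c i * (x i : ℝ)) →
      x j + ∑ i ∈ (Finset.Ioi j).filter (fun i => 1 ≤ θ i), φ j i * (x i - θ i)
        = θ j :=
  stmt_10_general a u ha b hsi θ hθ φ hφ c j hcj hct hleaf
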